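/- arXiv:1910.03143 — 7 statements merged into one kernel-verified Lean document; each statement's English description precedes it below -/
import Mathlib

section
/- Let n ≥ 1, let T ≥ 0, and let X be a real symmetric n×n matrix satisfying the linear relaxation constraints (X_{ii} ≥ 0 for all i, and X_{ii} + X_{jj} + 2X_{ij} ≥ 0 and X_{ii} + X_{jj} − 2X_{ij} ≥ 0 for all i, j) and tr(X) = T. Then the smallest eigenvalue of X satisfies λ_min(X) ≥ T/n − (T/n)·√((n³ − 1)(n − 1)). -/
/-!
By Gershgorin's theorem every eigenvalue `λ` satisfies `λ ≥ X k k - ∑_{j ≠ k} |X k j|` for some `k`.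
The relaxation constraints give `|X k j| ≤ (X k k + X j j) / 2 ≤ T / 2`, so `λ ≥ -(n - 1) T / 2`,
which is below the claimed bound for `n ≥ 2` because `1 + n (n - 1) / 2 ≤ √((n³ - 1)(n - 1))`.
For `n = 1` the only eigenvalue is the trace `T`.
-/

open Matrix Finset

theorem abs_le_add_div_two {a b c : ℝ} (hplus : 0 ≤ a + b + 2 * c)
    (hminus : 0 ≤ a + b - 2 * c) : |c| ≤ (a + b) / 2 :=
  abs_le.mpr ⟨by linarith, by linarith⟩

theorem Matrix.diag_add_diag_le_trace {ι : Type*} [Fintype ι] [DecidableEq ι] {X : Matrix ι ι ℝ}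
    (hdiag : ∀ i, 0 ≤ X i i) {i j : ι} (hij : i ≠ j) : X i i + X j j ≤ X.trace :=
  calc X i i + X j j = ∑ k ∈ {i, j}, X k k := (sum_pair (f := fun k => X k k) hij).symm
    _ ≤ ∑ k, X k k := sum_le_univ_sum_of_nonneg hdiag

theorem Matrix.neg_card_sub_one_mul_trace_div_two_le_of_hasEigenvalue {ι : Type*} [Fintype ι]
    [DecidableEq ι] {X : Matrix ι ι ℝ} (hdiag : ∀ i, 0 ≤ X i i)
    (hplus : ∀ i j, 0 ≤ X i i + X j j + 2 * X i j)
    (hminus : ∀ i j, 0 ≤ X i i + X j j - 2 * X i j) {μ : ℝ}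
    (hμ : Module.End.HasEigenvalue (toLin' X) μ) :
    -((Fintype.card ι - 1) * X.trace / 2) ≤ μ := by
  obtain ⟨i, hi⟩ := eigenvalue_mem_ball hμ
  have hrow : ∑ j ∈ univ.erase i, ‖X i j‖ ≤ (Fintype.card ι - 1) * X.trace / 2 := calc
    ∑ j ∈ univ.erase i, ‖X i j‖ ≤ ∑ j ∈ univ.erase i, X.trace / 2 := by
      refine sum_le_sum fun j hj => ?_
      have := diag_add_diag_le_trace hdiag (ne_of_mem_erase hj).symm
      linarith [abs_le_add_div_two (hplus i j) (hminus i j), Real.norm_eq_abs (X i j)]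
    _ = (Fintype.card ι - 1) * X.trace / 2 := by
      rw [sum_const, card_erase_of_mem (mem_univ i), card_univ, nsmul_eq_mul,
        Nat.cast_pred (Fintype.card_pos_iff.mpr ⟨i⟩)]
      ring
  rw [Metric.mem_closedBall, Real.dist_eq] at hi
  linarith [neg_abs_le (μ - X i i), hdiag i]

theorem one_add_mul_sub_one_div_two_le_sqrt {x : ℝ} (hx : 2 ≤ x) :
    1 + x * (x - 1) / 2 ≤ √((x ^ 3 - 1) * (x - 1)) :=
  Real.le_sqrt_of_sq_le (by nlinarith [sq_nonneg (x - 2), sq_nonneg (x ^ 2 - 1)])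

/-- For a real symmetric `n × n` matrix `X` satisfying the linear
relaxation constraints with `tr X = T`, every eigenvalue of `X` (in particular the
smallest) is at least `T / n - (T / n) * √((n³ - 1) * (n - 1))`. -/
theorem stmt_2 (n : ℕ) (hn : 1 ≤ n) (T : ℝ) (hT : 0 ≤ T)
    (X : Matrix (Fin n) (Fin n) ℝ) (hX : X.IsHermitian)
    (hdiag : ∀ i, 0 ≤ X i i)
    (hplus : ∀ i j, 0 ≤ X i i + X j j + 2 * X i j)
    (hminus : ∀ i j, 0 ≤ X i i + X j j - 2 * X i j)
    (htr : X.trace = T) :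
    ∀ i, T / n - (T / n) * Real.sqrt (((n : ℝ) ^ 3 - 1) * ((n : ℝ) - 1))
      ≤ hX.eigenvalues i := by
  intro i
  obtain rfl | hn2 := hn.eq_or_lt
  · have hT_eig : hX.eigenvalues i = T := by
      simpa [Subsingleton.elim i 0, htr] using hX.trace_eq_sum_eigenvalues.symm
    norm_num [hT_eig]
  have hμ : Module.End.HasEigenvalue (toLin' X) (hX.eigenvalues i) :=
    .of_mem_spectrum ((spectrum_toLin' X).symm ▸ hX.eigenvalues_mem_spectrum_real i)
  have hlower := neg_card_sub_one_mul_trace_div_two_le_of_hasEigenvalue hdiag hplus hminus hμ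
  rw [Fintype.card_fin, htr] at hlower
  have hsqrt := mul_le_mul_of_nonneg_left
    (one_add_mul_sub_one_div_two_le_sqrt (Nat.ofNat_le_cast.mpr hn2)) (div_nonneg hT n.cast_nonneg)
  have hn0 : (n : ℝ) ≠ 0 := by positivity
  have hexpand : T / n * (1 + n * (n - 1) / 2) = T / n + (n - 1) * T / 2 := by field_simp
  linarith
end

section
/- Let n ≥ 1, let T ≥ 0, and let X be a real symmetric n×n matrix satisfying the linear relaxation constraints (X_{ii} ≥ 0 for all i, and X_{ii} + X_{jj} + 2X_{ij} ≥ 0 and X_{ii} + X_{jj} − 2X_{ij} ≥ 0 for all i, j) and tr(X) = T. Then the smallest eigenvalue of X satisfies λ_min(X) ≥ T/n − n·T. -/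
/-!
By Gershgorin's circle theorem every eigenvalue `μ` of `X` satisfies
`|μ - X k k| ≤ ∑_{j ≠ k} |X k j|` for some row `k`. The two pair constraints say exactly that
`|X k j| ≤ (X k k + X j j) / 2`, and as the diagonal is nonnegative with sum `T`, this is at most
`T / 2` whenever `j ≠ k`. Hence `μ ≥ X k k - (n - 1) T / 2 ≥ -(n - 1) T / 2 ≥ T / n - n T`.
-/

open Finset

theorem abs_le_add_div_two_of_nonneg {K : Type*} [Field K] [LinearOrder K] [IsStrictOrderedRing K]
    {a b c : K} (hplus : 0 ≤ a + b + 2 * c) (hminus : 0 ≤ a + b - 2 * c) :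
    |c| ≤ (a + b) / 2 :=
  abs_le.mpr ⟨by linarith, by linarith⟩

namespace Matrix

variable {ι : Type*} [Fintype ι]

theorem diag_add_diag_le_trace_s3 {R : Type*} [AddCommMonoid R] [PartialOrder R]
    [IsOrderedAddMonoid R] {A : Matrix ι ι R} (hdiag : ∀ i, 0 ≤ A i i) {i j : ι} (hij : i ≠ j) :
    A i i + A j j ≤ A.trace := by
  classical
  calc A i i + A j j = ∑ l ∈ {i, j}, A l l := (sum_pair (f := fun l => A l l) hij).symm
    _ ≤ ∑ l, A l l := sum_le_univ_sum_of_nonneg hdiag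

theorem neg_card_sub_one_mul_trace_div_two_le_of_hasEigenvalue_s3 [DecidableEq ι]
    {A : Matrix ι ι ℝ} (hdiag : ∀ i, 0 ≤ A i i)
    (hoffdiag : ∀ i j, |A i j| ≤ (A i i + A j j) / 2)
    {μ : ℝ} (hμ : Module.End.HasEigenvalue (toLin' A) μ) :
    -((Fintype.card ι - 1) * A.trace / 2) ≤ μ := by
  obtain ⟨k, hk⟩ := eigenvalue_mem_ball hμ
  rw [Metric.mem_closedBall, Real.dist_eq] at hk
  have hradius : ∑ j ∈ univ.erase k, ‖A k j‖ ≤ (Fintype.card ι - 1) * A.trace / 2 := by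
    calc ∑ j ∈ univ.erase k, ‖A k j‖
        ≤ ∑ _j ∈ univ.erase k, A.trace / 2 := by
          refine sum_le_sum fun j hj => ?_
          rw [Real.norm_eq_abs]
          have := diag_add_diag_le_trace_s3 hdiag (ne_of_mem_erase hj).symm
          linarith [hoffdiag k j]
      _ = (Fintype.card ι - 1) * A.trace / 2 := by
          have : Nonempty ι := ⟨k⟩
          rw [sum_const, card_erase_of_mem (mem_univ k), card_univ, nsmul_eq_mul,
            Nat.cast_pred Fintype.card_pos, mul_div_assoc]
  linarith [neg_abs_le (μ - A k k), hdiag k]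

end Matrix

theorem stmt_3_general (n : ℕ) (T : ℝ) (hT : 0 ≤ T)
    (X : Matrix (Fin n) (Fin n) ℝ) (hX : X.IsHermitian)
    (hdiag : ∀ i, 0 ≤ X i i)
    (hplus : ∀ i j, 0 ≤ X i i + X j j + 2 * X i j)
    (hminus : ∀ i j, 0 ≤ X i i + X j j - 2 * X i j)
    (htr : X.trace = T) :
    ∀ i, T / n - (n : ℝ) * T ≤ hX.eigenvalues i := by
  intro i
  have hμ : Module.End.HasEigenvalue (Matrix.toLin' X) (hX.eigenvalues i) := by
    rw [Module.End.hasEigenvalue_iff_mem_spectrum, Matrix.spectrum_toLin']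
    exact hX.eigenvalues_mem_spectrum_real i
  have hbound := Matrix.neg_card_sub_one_mul_trace_div_two_le_of_hasEigenvalue_s3 hdiag
    (fun i j => abs_le_add_div_two_of_nonneg (hplus i j) (hminus i j)) hμ
  rw [Fintype.card_fin, htr] at hbound
  have hn : (1 : ℝ) ≤ n := by exact_mod_cast i.pos
  have hTn : T / n ≤ T := div_le_self hT hn
  linarith [mul_nonneg (sub_nonneg.mpr hn) hT]

/-- For a real symmetric `n × n` matrix `X` satisfying the linear
relaxation constraints with `tr X = T`, every eigenvalue of `X` (in particular the
smallest) is at least `T / n - n * T`. -/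
theorem stmt_3 (n : ℕ) (hn : 1 ≤ n) (T : ℝ) (hT : 0 ≤ T)
    (X : Matrix (Fin n) (Fin n) ℝ) (hX : X.IsHermitian)
    (hdiag : ∀ i, 0 ≤ X i i)
    (hplus : ∀ i j, 0 ≤ X i i + X j j + 2 * X i j)
    (hminus : ∀ i j, 0 ≤ X i i + X j j - 2 * X i j)
    (htr : X.trace = T) :
    ∀ i, T / n - (n : ℝ) * T ≤ hX.eigenvalues i :=
  stmt_3_general n T hT X hX hdiag hplus hminus htr
end

section
/- Let n ≥ 1, let T ≥ 0, and let X be a real symmetric n×n matrix satisfying the 2×2 minor constraints (X_{ij}² ≤ X_{ii}·X_{jj} for all pairs i, j), X_{ii} ≥ 0 for all i, and tr(X) = T. Then the smallest eigenvalue of X satisfies λ_min(X) ≥ 2T/n − T. -/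
open Matrix RealInnerProductSpace


/-- For a real symmetric `n × n` matrix `X` satisfying the 2×2 minor
constraints, nonnegative diagonal, and `tr X = T`, every eigenvalue of `X`
(in particular the smallest) is at least `2 * T / n - T`. -/
theorem stmt_5 (n : ℕ) (hn : 1 ≤ n) (T : ℝ) (hT : 0 ≤ T)
    (X : Matrix (Fin n) (Fin n) ℝ) (hX : X.IsHermitian)
    (hminor : ∀ i j, (X i j) ^ 2 ≤ X i i * X j j)
    (hdiag : ∀ i, 0 ≤ X i i)
    (htr : X.trace = T) :
    ∀ i, 2 * T / n - T ≤ hX.eigenvalues i := by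
  intro i
  set lam : ℝ := hX.eigenvalues i with hlamdef
  set v : Fin n → ℝ := ⇑(hX.eigenvectorBasis i) with hvdef
  have hv : X *ᵥ v = lam • v := hX.mulVec_eigenvectorBasis i
  -- unit norm
  have hunit : ∑ j, v j ^ 2 = 1 := by
    have h := hX.eigenvectorBasis.orthonormal.1 i
    have h2 : (inner ℝ (hX.eigenvectorBasis i) (hX.eigenvectorBasis i) : ℝ) = 1 := by
      rw [real_inner_self_eq_norm_sq, h]; norm_num
    rw [PiLp.inner_apply] at h2
    simpa [sq] using h2
  -- eigenvalue as quadratic form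
  have hlam : lam = ∑ j, ∑ k, v j * X j k * v k := by
    have h1 : ∑ j, v j * (X *ᵥ v) j = lam := by
      rw [hv]
      simp only [Pi.smul_apply, smul_eq_mul]
      rw [show ∑ j, v j * (lam * v j) = lam * ∑ j, v j ^ 2 by
        rw [Finset.mul_sum]; congr 1; ext j; ring, hunit, mul_one]
    rw [← h1]
    congr 1; ext j
    simp only [Matrix.mulVec, dotProduct, Finset.mul_sum]
    congr 1; ext k; ring
  set a : Fin n → ℝ := fun j => Real.sqrt (X j j) * |v j| with hadef
  have ha_nonneg : ∀ j, 0 ≤ a j := fun j =>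
    mul_nonneg (Real.sqrt_nonneg _) (abs_nonneg _)
  have hdiag_eq : ∀ j, v j * X j j * v j = a j ^ 2 := by
    intro j
    have : a j ^ 2 = X j j * v j ^ 2 := by
      rw [hadef]; rw [mul_pow, Real.sq_sqrt (hdiag j), sq_abs]
    rw [this]; ring
  have habs : ∀ j k, |X j k| ≤ Real.sqrt (X j j) * Real.sqrt (X k k) := by
    intro j k
    rw [← Real.sqrt_mul (hdiag j)]
    have := hminor j k
    calc |X j k| = Real.sqrt ((X j k) ^ 2) := by rw [Real.sqrt_sq_eq_abs]
      _ ≤ Real.sqrt (X j j * X k k) := Real.sqrt_le_sqrt this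
  have hterm : ∀ j k, -(a j * a k) ≤ v j * X j k * v k := by
    intro j k
    have h1 : |v j * X j k * v k| ≤ a j * a k := by
      have : |v j * X j k * v k| = |X j k| * (|v j| * |v k|) := by
        rw [abs_mul, abs_mul]; ring
      rw [this, hadef]
      have h2 : |X j k| * (|v j| * |v k|) ≤
          (Real.sqrt (X j j) * Real.sqrt (X k k)) * (|v j| * |v k|) :=
        mul_le_mul_of_nonneg_right (habs j k)
          (mul_nonneg (abs_nonneg _) (abs_nonneg _))
      calc |X j k| * (|v j| * |v k|)
          ≤ Real.sqrt (X j j) * Real.sqrt (X k k) * (|v j| * |v k|) := h2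
        _ = Real.sqrt (X j j) * |v j| * (Real.sqrt (X k k) * |v k|) := by ring
    nlinarith [abs_le.mp h1]
  set s : ℝ := ∑ j, a j ^ 2 with hsdef
  have hs_nonneg : 0 ≤ s := Finset.sum_nonneg fun j _ => sq_nonneg _
  -- key lower bound : lam + (∑ a)^2 ≥ 2 s
  have hkey : 2 * s ≤ lam + (∑ j, a j) ^ 2 := by
    have hsum : lam + (∑ j, a j) ^ 2 = ∑ j, ∑ k, (v j * X j k * v k + a j * a k) := by
      rw [hlam, sq, Finset.sum_mul_sum]
      rw [← Finset.sum_add_distrib]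
      congr 1; ext j
      rw [← Finset.sum_add_distrib]
    rw [hsum]
    have hrow : ∀ j, 2 * a j ^ 2 ≤ ∑ k, (v j * X j k * v k + a j * a k) := by
      intro j
      have h1 := Finset.single_le_sum
        (f := fun k => v j * X j k * v k + a j * a k)
        (fun k _ => by show 0 ≤ v j * X j k * v k + a j * a k; nlinarith [hterm j k]) (Finset.mem_univ j)
      replace h1 : v j * X j j * v j + a j * a j ≤ ∑ k, (v j * X j k * v k + a j * a k) := h1
      have h2 : v j * X j j * v j + a j * a j = 2 * a j ^ 2 := by
        rw [hdiag_eq j]; ring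
      linarith [h1, h2.ge]
    calc 2 * s = ∑ j, 2 * a j ^ 2 := by rw [hsdef, Finset.mul_sum]
      _ ≤ _ := Finset.sum_le_sum fun j _ => hrow j
  -- Cauchy-Schwarz 1 : (∑ a)^2 ≤ T
  have htrace : ∑ j, X j j = T := by rw [← htr]; rfl
  have hQ1 : (∑ j, a j) ^ 2 ≤ T := by
    have := Finset.sum_mul_sq_le_sq_mul_sq Finset.univ
      (fun j => Real.sqrt (X j j)) (fun j => |v j|)
    have heq1 : ∑ j, Real.sqrt (X j j) ^ 2 = T := by
      rw [← htrace]; congr 1; ext j; exact Real.sq_sqrt (hdiag j)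
    have heq2 : ∑ j, |v j| ^ 2 = 1 := by
      rw [← hunit]; congr 1; ext j; exact sq_abs _
    rw [heq1, heq2, mul_one] at this
    exact this
  -- Cauchy-Schwarz 2 : (∑ a)^2 ≤ n * s
  have hQ2 : (∑ j, a j) ^ 2 ≤ n * s := by
    have := Finset.sum_mul_sq_le_sq_mul_sq Finset.univ (fun _ => (1:ℝ)) a
    simpa [hsdef] using this
  have hn0 : (0:ℝ) < n := by positivity
  rw [sub_le_iff_le_add, div_le_iff₀ hn0]
  rcases le_total T ((n:ℝ) * s) with hA | hB
  · nlinarith [hkey, hQ1, hA, hn0]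
  · rcases eq_or_lt_of_le hn with h1 | h2
    · -- n = 1
      subst h1
      have hu : v 0 ^ 2 = 1 := by simpa using hunit
      have ht0 : X 0 0 = T := by simpa using htrace
      have hs1 : s = T := by
        rw [hsdef, Fin.sum_univ_one, ← hdiag_eq 0]
        linear_combination X 0 0 * hu + ht0
      have hQ2' : (∑ j, a j) ^ 2 ≤ 1 * s := by
        have := hQ2; push_cast at this; linarith
      push_cast
      nlinarith [hkey, hQ2', hs1]
    · have hn2 : (2:ℝ) ≤ n := by exact_mod_cast h2
      nlinarith [hkey, hQ2, hB, hn0, hn2, hs_nonneg, hT,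
        mul_nonneg (sub_nonneg.2 hn2) (sub_nonneg.2 hB)]
end

section
/- Let n ≥ 2, let T ≥ 0, and let X be a real symmetric n×n matrix satisfying the 2×2 minor constraints (X_{ij}² ≤ X_{ii}·X_{jj} for all pairs i, j), X_{ii} ≥ 0 for all i, and tr(X) ≤ T. Then the smallest eigenvalue of X satisfies λ_min(X) ≥ 2T/n − T. -/
/-! For a unit eigenvector `w` the eigenvalue is `wᵀXw`. Put `bᵢ = √Xᵢᵢ |wᵢ|`: the diagonal terms
of `wᵀXw` equal `bᵢ²` and the 2×2 minor constraints bound the others by `|wᵢXᵢⱼwⱼ| ≤ bᵢbⱼ`, so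
`wᵀXw ≥ 2∑bᵢ² - (∑bᵢ)²`. Cauchy–Schwarz gives both `(∑bᵢ)² ≤ n∑bᵢ²` and `(∑bᵢ)² ≤ tr X`, hence
`wᵀXw ≥ (2/n - 1)(∑bᵢ)² ≥ (2/n - 1) tr X ≥ (2/n - 1) T`, the coefficient being `≤ 0` for `n ≥ 2`. -/

open Finset Matrix

section MinorConstraints

variable {ι : Type*} {X : Matrix ι ι ℝ}

lemma abs_apply_le_sqrt_mul_sqrt {i j : ι} (hminor : X i j ^ 2 ≤ X i i * X j j)
    (hdiag : 0 ≤ X i i) : |X i j| ≤ √(X i i) * √(X j j) := by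
  rw [← Real.sqrt_mul hdiag, ← Real.sqrt_sq_eq_abs]
  exact Real.sqrt_le_sqrt hminor

lemma mul_apply_self_mul (hdiag : ∀ i, 0 ≤ X i i) (w : ι → ℝ) (i : ι) :
    w i * X i i * w i = (√(X i i) * |w i|) ^ 2 := by
  rw [mul_pow, Real.sq_sqrt (hdiag i), sq_abs]; ring

lemma neg_mul_le_mul_apply_mul (hminor : ∀ i j, X i j ^ 2 ≤ X i i * X j j)
    (hdiag : ∀ i, 0 ≤ X i i) (w : ι → ℝ) (i j : ι) :
    -((√(X i i) * |w i|) * (√(X j j) * |w j|)) ≤ w i * X i j * w j := by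
  have h : |w i * X i j * w j| ≤ (√(X i i) * |w i|) * (√(X j j) * |w j|) := by
    calc |w i * X i j * w j| = |w i| * |X i j| * |w j| := by rw [abs_mul, abs_mul]
      _ ≤ |w i| * (√(X i i) * √(X j j)) * |w j| := by
        gcongr; exact abs_apply_le_sqrt_mul_sqrt (hminor i j) (hdiag i)
      _ = _ := by ring
  exact neg_le_of_abs_le h

variable [Fintype ι]

lemma two_mul_sum_sq_sub_sq_sum_le_dotProduct_mulVec
    (hminor : ∀ i j, X i j ^ 2 ≤ X i i * X j j) (hdiag : ∀ i, 0 ≤ X i i) (w : ι → ℝ) :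
    2 * ∑ i, (√(X i i) * |w i|) ^ 2 - (∑ i, √(X i i) * |w i|) ^ 2 ≤ w ⬝ᵥ X *ᵥ w := by
  classical
  set b : ι → ℝ := fun i => √(X i i) * |w i|
  have hentry (i j : ι) :
      (if i = j then 2 * b i ^ 2 else 0) - b i * b j ≤ w i * X i j * w j := by
    split_ifs with h
    · subst h
      exact (by rw [mul_apply_self_mul hdiag w i]; ring : _ = _).le
    · simpa [b] using neg_mul_le_mul_apply_mul hminor hdiag w i j
  calc 2 * ∑ i, b i ^ 2 - (∑ i, b i) ^ 2
      = ∑ i, ∑ j, ((if i = j then 2 * b i ^ 2 else 0) - b i * b j) := by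
        simp only [sum_sub_distrib, sum_ite_eq, mem_univ, if_true, ← mul_sum, sq, sum_mul_sum]
    _ ≤ ∑ i, ∑ j, w i * X i j * w j := by gcongr with i _ j _; exact hentry i j
    _ = w ⬝ᵥ X *ᵥ w := by
        simp only [dotProduct, mulVec, mul_sum]
        exact sum_congr rfl fun _ _ => sum_congr rfl fun _ _ => by ring

lemma sq_sum_sqrt_diag_mul_abs_le_trace (hdiag : ∀ i, 0 ≤ X i i) {w : ι → ℝ}
    (hw : ∑ i, w i ^ 2 = 1) : (∑ i, √(X i i) * |w i|) ^ 2 ≤ X.trace := by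
  calc (∑ i, √(X i i) * |w i|) ^ 2 ≤ (∑ i, √(X i i) ^ 2) * ∑ i, |w i| ^ 2 :=
        sum_mul_sq_le_sq_mul_sq _ _ _
    _ = X.trace := by simp [Real.sq_sqrt (hdiag _), hw, Matrix.trace]

lemma two_div_card_sub_one_mul_trace_le_dotProduct_mulVec (hcard : 2 ≤ Fintype.card ι)
    (hminor : ∀ i j, X i j ^ 2 ≤ X i i * X j j) (hdiag : ∀ i, 0 ≤ X i i) {w : ι → ℝ}
    (hw : ∑ i, w i ^ 2 = 1) : (2 / Fintype.card ι - 1) * X.trace ≤ w ⬝ᵥ X *ᵥ w := by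
  set b : ι → ℝ := fun i => √(X i i) * |w i|
  have hcard' : (2 : ℝ) ≤ Fintype.card ι := by exact_mod_cast hcard
  have hS : (∑ i, b i) ^ 2 / Fintype.card ι ≤ ∑ i, b i ^ 2 := by
    rw [div_le_iff₀ (by linarith), mul_comm]; exact sq_sum_le_card_mul_sum_sq
  have hcoef : 2 / (Fintype.card ι : ℝ) - 1 ≤ 0 := by
    rw [sub_nonpos, div_le_one (by linarith)]; exact hcard'
  calc (2 / Fintype.card ι - 1) * X.trace
      ≤ (2 / Fintype.card ι - 1) * (∑ i, b i) ^ 2 :=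
        mul_le_mul_of_nonpos_left (sq_sum_sqrt_diag_mul_abs_le_trace hdiag hw) hcoef
    _ ≤ 2 * ∑ i, b i ^ 2 - (∑ i, b i) ^ 2 := by
        rw [sub_mul, one_mul, div_mul_eq_mul_div, mul_div_assoc]; linarith
    _ ≤ w ⬝ᵥ X *ᵥ w := two_mul_sum_sq_sub_sq_sum_le_dotProduct_mulVec hminor hdiag w

end MinorConstraints

lemma Matrix.IsHermitian.eigenvalues_eq_dotProduct_mulVec {ι : Type*} [Fintype ι]
    [DecidableEq ι] {A : Matrix ι ι ℝ} (hA : A.IsHermitian) (i : ι) :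
    hA.eigenvalues i = ⇑(hA.eigenvectorBasis i) ⬝ᵥ A *ᵥ ⇑(hA.eigenvectorBasis i) := by
  simpa using hA.eigenvalues_eq i

lemma Matrix.IsHermitian.sum_eigenvectorBasis_sq {ι : Type*} [Fintype ι]
    [DecidableEq ι] {A : Matrix ι ι ℝ} (hA : A.IsHermitian) (i : ι) :
    ∑ j, hA.eigenvectorBasis i j ^ 2 = 1 := by
  have h := EuclideanSpace.real_norm_sq_eq (hA.eigenvectorBasis i)
  rw [hA.eigenvectorBasis.orthonormal.1 i, one_pow] at h
  exact h.symm

theorem stmt_6_general (n : ℕ) (hn : 2 ≤ n) (T : ℝ)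
    (X : Matrix (Fin n) (Fin n) ℝ) (hX : X.IsHermitian)
    (hminor : ∀ i j, (X i j) ^ 2 ≤ X i i * X j j)
    (hdiag : ∀ i, 0 ≤ X i i)
    (htr : X.trace ≤ T) :
    ∀ i, 2 * T / n - T ≤ hX.eigenvalues i := by
  intro i
  have hcard : 2 ≤ Fintype.card (Fin n) := by simpa using hn
  have hcoef : 2 / (n : ℝ) - 1 ≤ 0 := by
    rw [sub_nonpos, div_le_one (by positivity)]; exact_mod_cast hn
  calc 2 * T / n - T = (2 / n - 1) * T := by ring
    _ ≤ (2 / n - 1) * X.trace := mul_le_mul_of_nonpos_left htr hcoef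
    _ ≤ hX.eigenvalues i := by
      rw [hX.eigenvalues_eq_dotProduct_mulVec]
      simpa using two_div_card_sub_one_mul_trace_le_dotProduct_mulVec hcard hminor hdiag
        (hX.sum_eigenvectorBasis_sq i)

/-- For `n ≥ 2` and a real symmetric `n × n` matrix `X` satisfying the
2×2 minor constraints, nonnegative diagonal, and `tr X ≤ T`, every eigenvalue of `X`
(in particular the smallest) is at least `2 * T / n - T`. -/
theorem stmt_6 (n : ℕ) (hn : 2 ≤ n) (T : ℝ) (hT : 0 ≤ T)
    (X : Matrix (Fin n) (Fin n) ℝ) (hX : X.IsHermitian)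
    (hminor : ∀ i j, (X i j) ^ 2 ≤ X i i * X j j)
    (hdiag : ∀ i, 0 ≤ X i i)
    (htr : X.trace ≤ T) :
    ∀ i, 2 * T / n - T ≤ hX.eigenvalues i :=
  stmt_6_general n hn T X hX hminor hdiag htr
end

section
/- Let X̂ be a real symmetric n×n matrix that is not positive semidefinite. Then there exists a real symmetric n×n matrix Y with operator (spectral) norm at most 1 such that ⟨X̂, Y⟩ > tr(X̂), while ⟨X, Y⟩ ≤ tr(X) for every real symmetric positive semidefinite n×n matrix X. In other words, Y provides a valid 'nuclear norm cut' separating X̂ from the positive semidefinite cone. -/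
open Matrix
open scoped Matrix.Norms.L2Operator

lemma trace_mul_vecMulVec {n : ℕ} (X : Matrix (Fin n) (Fin n) ℝ) (x : Fin n → ℝ) :
    (Xᵀ * vecMulVec x x).trace = x ⬝ᵥ X *ᵥ x := by
  simp only [Matrix.trace, Matrix.diag, Matrix.mul_apply, vecMulVec_apply, transpose_apply,
    dotProduct, mulVec, dotProduct]
  rw [Finset.sum_comm]
  congr 1; ext i
  rw [Finset.mul_sum]
  congr 1; ext j
  ring

/-- If a real symmetric `n × n` matrix `X̂` is not positive semidefinite,
there is a symmetric matrix `Y` of operator norm at most 1 such that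
`⟨X̂, Y⟩ > tr X̂` while `⟨X, Y⟩ ≤ tr X` for every real symmetric PSD matrix `X`:
a valid nuclear norm cut separating `X̂` from the positive semidefinite cone. -/
theorem stmt_13 (n : ℕ) (Xhat : Matrix (Fin n) (Fin n) ℝ)
    (hXhat : Xhat.IsSymm) (hnpsd : ¬ Xhat.PosSemidef) :
    ∃ Y : Matrix (Fin n) (Fin n) ℝ, Y.IsSymm ∧ ‖Y‖ ≤ 1 ∧
      Xhat.trace < (Xhatᵀ * Y).trace ∧
      ∀ X : Matrix (Fin n) (Fin n) ℝ, X.PosSemidef → (Xᵀ * Y).trace ≤ X.trace := by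
  -- get a vector with negative quadratic form
  have hherm : Xhat.IsHermitian := by
    ext i j
    simpa [Matrix.conjTranspose_apply] using congrFun (congrFun hXhat i) j
  rw [Matrix.posSemidef_iff_dotProduct_mulVec] at hnpsd
  push_neg at hnpsd
  obtain ⟨x, hx⟩ := hnpsd hherm
  rw [star_trivial] at hx
  have hxne : x ≠ 0 := by
    rintro rfl
    simp at hx
  have h0 : (0:ℝ) ≤ x ⬝ᵥ x := by
    simpa using dotProduct_star_self_nonneg x
  have hc : (0:ℝ) < x ⬝ᵥ x :=
    h0.lt_of_ne fun h => hxne (dotProduct_self_eq_zero.mp h.symm)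
  set c : ℝ := x ⬝ᵥ x with hcdef
  set Y : Matrix (Fin n) (Fin n) ℝ := 1 - (2 / c) • vecMulVec x x with hY
  have hsymm : Y.IsSymm := by
    rw [Matrix.IsSymm, hY, transpose_sub, transpose_smul, transpose_one]
    congr 1
    ext i j
    simp [vecMulVec_apply, mul_comm]
  have htr : ∀ X : Matrix (Fin n) (Fin n) ℝ,
      (Xᵀ * Y).trace = X.trace - (2 / c) * (x ⬝ᵥ X *ᵥ x) := by
    intro X
    rw [hY, Matrix.mul_sub, Matrix.mul_smul, trace_sub, trace_smul, mul_one,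
      trace_transpose, trace_mul_vecMulVec]
    simp
  -- P² = c • P
  have hPP : vecMulVec x x * vecMulVec x x = c • vecMulVec x x := by
    ext i j
    simp only [Matrix.mul_apply, vecMulVec_apply, Matrix.smul_apply, smul_eq_mul, hcdef, dotProduct]
    rw [Finset.sum_mul]
    congr 1; ext k
    ring
  have hYY : Y * Y = 1 := by
    rw [hY]
    simp only [sub_mul, mul_sub, one_mul, mul_one, smul_mul_assoc, mul_smul_comm, hPP,
      smul_smul]
    have hac : (2 / c) * c = 2 := div_mul_cancel₀ 2 hc.ne'
    rw [hac, smul_sub, smul_smul, show (2 / c) * 2 = 2 / c + 2 / c by ring, add_smul]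
    abel
  have hnorm : ‖Y‖ ≤ 1 := by
    have h1 : ‖Yᴴ * Y‖ = ‖Y‖ * ‖Y‖ := Matrix.l2_opNorm_conjTranspose_mul_self Y
    have hYH : Yᴴ = Y := by
      ext i j
      have := congrFun (congrFun hsymm i) j
      simpa [Matrix.conjTranspose_apply, Matrix.IsSymm] using this
    rw [hYH, hYY] at h1
    have hone : ‖(1 : Matrix (Fin n) (Fin n) ℝ)‖ ≤ 1 := by
      rw [Matrix.cstar_norm_def, _root_.map_one]
      exact ContinuousLinearMap.norm_id_le
    nlinarith [norm_nonneg Y]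
  refine ⟨Y, hsymm, hnorm, ?_, ?_⟩
  · rw [htr Xhat]
    have : (2 / c) * (x ⬝ᵥ Xhat *ᵥ x) < 0 :=
      mul_neg_of_pos_of_neg (by positivity) hx
    linarith
  · intro X hX
    rw [htr X]
    have h0 : 0 ≤ x ⬝ᵥ X *ᵥ x := by
      have := hX.dotProduct_mulVec_nonneg x
      rwa [star_trivial] at this
    have : 0 ≤ (2 / c) * (x ⬝ᵥ X *ᵥ x) := mul_nonneg (by positivity) h0
    linarith
end

section
/- Let d ≥ 1, ε > 0, L > 0, T ≥ 0. Let x_1, …, x_N be points in ℝ^d with ‖x_t‖₂ ≤ T for all t, and let g_1, …, g_N be L-Lipschitz real-valued functions on ℝ^d such that g_i(x_i) > ε for every i and g_i(x_k) ≤ 0 whenever i < k. Then N ≤ (2LT/ε + 1)^d. In particular, a Kelley-type cutting-plane method over a feasible region bounded in norm by T, using L-Lipschitz cut functions, produces an ε-feasible iterate within (2LT/ε + 1)^d iterations. -/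
open Metric MeasureTheory
open scoped ENNReal

/-- Kelley-type iteration bound. If `x 1, …, x N` are points of `ℝ^d`
(Euclidean norm) with `‖x t‖ ≤ T`, and `g 1, …, g N` are `L`-Lipschitz functions with
`g i (x i) > ε` for all `i` and `g i (x k) ≤ 0` for `i < k`, then
`N ≤ (2 L T / ε + 1) ^ d`. -/
theorem stmt_18 (d : ℕ) (hd : 1 ≤ d) (ε L T : ℝ) (hε : 0 < ε) (hL : 0 < L) (hT : 0 ≤ T)
    (N : ℕ) (x : Fin N → EuclideanSpace ℝ (Fin d))
    (g : Fin N → EuclideanSpace ℝ (Fin d) → ℝ)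
    (hnorm : ∀ t, ‖x t‖ ≤ T)
    (hLip : ∀ t, ∀ a b : EuclideanSpace ℝ (Fin d), |g t a - g t b| ≤ L * ‖a - b‖)
    (hviol : ∀ i, ε < g i (x i))
    (hsat : ∀ i k : Fin N, i < k → g i (x k) ≤ 0) :
    (N : ℝ) ≤ (2 * L * T / ε + 1) ^ d := by
  set r : ℝ := ε / (2 * L) with hr_def
  have hr : 0 < r := div_pos hε (by linarith)
  -- separation: distinct points are more than 2r apart
  have hsep : ∀ i k : Fin N, i ≠ k → 2 * r < dist (x i) (x k) := by
    have key : ∀ i k : Fin N, i < k → 2 * r < dist (x i) (x k) := by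
      intro i k hik
      have h1 : ε < g i (x i) - g i (x k) := by
        have := hsat i k hik
        have := hviol i
        linarith
      have h2 : g i (x i) - g i (x k) ≤ L * ‖x i - x k‖ :=
        le_trans (le_abs_self _) (hLip i _ _)
      have h3 : ε < L * dist (x i) (x k) := by
        rw [dist_eq_norm]; linarith
      have : ε / L < dist (x i) (x k) := (div_lt_iff₀' hL).2 h3
      calc 2 * r = ε / L := by rw [hr_def]; field_simp
        _ < dist (x i) (x k) := this
    intro i k hik
    rcases lt_or_gt_of_ne hik with h | h
    · exact key i k h
    · rw [dist_comm]; exact key k i h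
  -- disjoint balls
  have hdisj : Pairwise (Function.onFun Disjoint fun i => ball (x i) r) := by
    intro i k hik
    apply ball_disjoint_ball
    rw [dist_eq_norm]
    have := hsep i k hik
    rw [dist_eq_norm] at this
    linarith
  have hfr : Module.finrank ℝ (EuclideanSpace ℝ (Fin d)) = d := by
    simp [finrank_euclideanSpace]
  -- volume computation
  set μ : Measure (EuclideanSpace ℝ (Fin d)) := volume with hμ
  have hball : ∀ i : Fin N, μ (ball (x i) r) = ENNReal.ofReal (r ^ d) * μ (ball 0 1) := by
    intro i
    rw [Measure.addHaar_ball_of_pos μ (x i) hr, hfr]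
  have hsubset : (⋃ i : Fin N, ball (x i) r) ⊆ closedBall (0 : EuclideanSpace ℝ (Fin d)) (T + r) := by
    intro z hz
    simp only [Set.mem_iUnion] at hz
    obtain ⟨i, hi⟩ := hz
    rw [mem_closedBall, dist_zero_right]
    calc ‖z‖ = ‖z - x i + x i‖ := by rw [sub_add_cancel]
      _ ≤ ‖z - x i‖ + ‖x i‖ := norm_add_le _ _
      _ ≤ r + T := by
          have : dist z (x i) < r := mem_ball.mp hi
          rw [dist_eq_norm] at this
          have := hnorm i
          linarith
      _ = T + r := by ring
  have hBpos : 0 < μ (ball (0 : EuclideanSpace ℝ (Fin d)) 1) :=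
    measure_ball_pos μ 0 one_pos
  have hBfin : μ (ball (0 : EuclideanSpace ℝ (Fin d)) 1) ≠ ⊤ :=
    (measure_ball_lt_top).ne
  have hvol : (N : ℝ≥0∞) * (ENNReal.ofReal (r ^ d) * μ (ball 0 1))
      ≤ ENNReal.ofReal ((T + r) ^ d) * μ (ball 0 1) := by
    have h1 : μ (⋃ i : Fin N, ball (x i) r) = ∑ i : Fin N, μ (ball (x i) r) := by
      rw [measure_iUnion hdisj fun i => measurableSet_ball]
      exact tsum_fintype _
    have h2 : μ (⋃ i : Fin N, ball (x i) r) ≤ μ (closedBall 0 (T + r)) :=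
      measure_mono hsubset
    have h3 : μ (closedBall (0 : EuclideanSpace ℝ (Fin d)) (T + r))
        = ENNReal.ofReal ((T + r) ^ d) * μ (ball 0 1) := by
      rw [Measure.addHaar_closedBall μ 0 (by linarith), hfr]
    calc (N : ℝ≥0∞) * (ENNReal.ofReal (r ^ d) * μ (ball 0 1))
        = ∑ i : Fin N, μ (ball (x i) r) := by
          simp [hball, Finset.sum_const, nsmul_eq_mul]
      _ = μ (⋃ i : Fin N, ball (x i) r) := h1.symm
      _ ≤ μ (closedBall 0 (T + r)) := h2
      _ = ENNReal.ofReal ((T + r) ^ d) * μ (ball 0 1) := h3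
  have hcancel : (N : ℝ≥0∞) * ENNReal.ofReal (r ^ d) ≤ ENNReal.ofReal ((T + r) ^ d) := by
    have hvol' : ((N : ℝ≥0∞) * ENNReal.ofReal (r ^ d)) * μ (ball 0 1)
        ≤ ENNReal.ofReal ((T + r) ^ d) * μ (ball 0 1) := by
      rw [mul_assoc]; exact hvol
    exact (ENNReal.mul_le_mul_iff_left hBpos.ne' hBfin).1 hvol'
  have hreal : (N : ℝ) * r ^ d ≤ (T + r) ^ d := by
    have : ENNReal.ofReal ((N : ℝ) * r ^ d) ≤ ENNReal.ofReal ((T + r) ^ d) := by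
      rwa [ENNReal.ofReal_mul (by positivity), ENNReal.ofReal_natCast]
    have hTr : (0 : ℝ) ≤ (T + r) ^ d := by positivity
    exact (ENNReal.ofReal_le_ofReal_iff hTr).1 this
  have hrd : 0 < r ^ d := by positivity
  have : (N : ℝ) ≤ ((T + r) / r) ^ d := by
    rw [div_pow, le_div_iff₀ hrd]
    exact hreal
  have heq : (T + r) / r = 2 * L * T / ε + 1 := by
    rw [hr_def]; field_simp
  rwa [heq] at this
end

section
/- Let X be a real symmetric n×n matrix with X_{ii} ≥ 0 for all i, satisfying the 2×2 minor constraints X_{ij}² ≤ X_{ii}·X_{jj} for all pairs i, j, and tr(X) = 1. Then for every index i, ∑_{j=1}^n X_{ij}² ≤ X_{ii}. (This aggregates the n² second-order cone minor constraints into n second-order cone constraints.) -/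
theorem Matrix.sum_sq_le_diag_mul_trace {ι R : Type*} [Fintype ι] [CommSemiring R]
    [PartialOrder R] [IsOrderedAddMonoid R] (X : Matrix ι ι R)
    (hminor : ∀ i j, X i j ^ 2 ≤ X i i * X j j) (i : ι) :
    ∑ j, X i j ^ 2 ≤ X i i * X.trace :=
  calc ∑ j, X i j ^ 2 ≤ ∑ j, X i i * X j j := Finset.sum_le_sum fun j _ => hminor i j
    _ = X i i * X.trace := by rw [Matrix.trace, Finset.mul_sum]; rfl

theorem stmt_19_general (n : ℕ)
    (X : Matrix (Fin n) (Fin n) ℝ)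
    (hminor : ∀ i j, (X i j) ^ 2 ≤ X i i * X j j)
    (htr : X.trace = 1) :
    ∀ i, ∑ j, (X i j) ^ 2 ≤ X i i := by
  intro i
  simpa only [htr, mul_one] using X.sum_sq_le_diag_mul_trace hminor i

/-- For a real symmetric `n × n` matrix `X` with nonnegative diagonal,
satisfying the 2×2 minor constraints `(X i j)² ≤ X i i * X j j` and `tr X = 1`, the
aggregated second-order cone constraints `∑ j, (X i j)² ≤ X i i` hold for every `i`. -/
theorem stmt_19 (n : ℕ) (hn : 1 ≤ n)
    (X : Matrix (Fin n) (Fin n) ℝ) (hsymm : X.IsSymm)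
    (hdiag : ∀ i, 0 ≤ X i i)
    (hminor : ∀ i j, (X i j) ^ 2 ≤ X i i * X j j)
    (htr : X.trace = 1) :
    ∀ i, ∑ j, (X i j) ^ 2 ≤ X i i :=
  stmt_19_general n X hminor htr
end
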